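/- Let C be a circuit with C_r(ι) ∩ C_r(ι') = ∅ for some inputs ι, ι' ∈ BM^m and some r ∈ N. Then C has an r-round execution in which an output register becomes metastable: there exist an input ι'' ∈ BM^m, a state s ∈ S^C_r(ι'' ∘ x_0), and an output register index j such that Out(s)_j = M. -/

import Mathlib

set_option linter.unusedVariables false

attribute [local instance] Classical.propDecidable

/-- Signal values: stable `zero`, `one`, and metastable `meta`. -/
inductive BM : Type
  | zero
  | one
  | metastable
  deriving DecidableEq

/-- Embedding of stable Boolean values into `BM`. -/
def BM.ofBool : Bool → BM
  | false => BM.zero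
  | true => BM.one

/-- `inResM x y` means `y ∈ ResM(x)`, the set of partial resolutions of `x`. -/
def inResM {k : ℕ} (x y : Fin k → BM) : Prop :=
  ∀ i, x i = y i ∨ x i = BM.metastable

/-- `inRes x y` means `y ∈ Res(x)`, i.e. `y` is a complete (stable) resolution of `x`. -/
def inRes {k : ℕ} (x y : Fin k → BM) : Prop :=
  inResM x y ∧ ∀ i, y i ≠ BM.metastable

/-- The complete resolutions of `x`, viewed as Boolean words. -/
def boolRes {k : ℕ} (x : Fin k → BM) : Set (Fin k → Bool) :=
  { z | ∀ i, x i = BM.ofBool (z i) ∨ x i = BM.metastable }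

/-- The metastable (Kleene) extension `f_M : BM^k → BM` of a Boolean function
`f : B^k → B`: it outputs a stable value `b` iff all complete resolutions of the
input evaluate to `b` under `f`, and `meta` otherwise. -/
noncomputable def kleene {k : ℕ} (f : (Fin k → Bool) → Bool) (x : Fin k → BM) : BM :=
  if ∀ z ∈ boolRes x, f z = false then BM.zero
  else if ∀ z ∈ boolRes x, f z = true then BM.one
  else BM.metastable

/-- Combinational logic with `m` input nodes: formulas built from inputs,
`BM`-constants (gates of indegree 0), and gates computing the metastable extension
of a Boolean function of their in-neighbors.  (A DAG evaluates exactly like the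
formula obtained by unsharing, so this faithfully captures evaluation of
combinational logic DAGs.) -/
inductive Comb (m : ℕ) : Type
  | input : Fin m → Comb m
  | const : BM → Comb m
  | gate : (j : ℕ) → ((Fin j → Bool) → Bool) → (Fin j → Comb m) → Comb m

/-- Recursive evaluation of combinational logic on input `x ∈ BM^m`. -/
noncomputable def Comb.eval {m : ℕ} (x : Fin m → BM) : Comb m → BM
  | .input i => x i
  | .const b => b
  | .gate _ f cs => kleene f (fun t => (cs t).eval x)

/-- Register types: simple, mask-0, mask-1. -/
inductive RegType : Type
  | simple
  | mask0
  | mask1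
  deriving DecidableEq

/-- `regRead t b (o, b')` holds iff a register of type `t` in state `b` can be read
with read value `o`, moving to state `b'`:  a register in a stable state yields that
state and keeps it; a simple register in state `meta` yields `meta` and stays `meta`;
a mask-`c` register in state `meta` either yields `c` staying in state `meta`, or
yields `meta` changing its state to `1 - c`. -/
def regRead : RegType → BM → BM × BM → Prop
  | _, BM.zero, p => p = (BM.zero, BM.zero)
  | _, BM.one, p => p = (BM.one, BM.one)
  | RegType.simple, BM.metastable, p => p = (BM.metastable, BM.metastable)
  | RegType.mask0, BM.metastable, p => p = (BM.zero, BM.metastable) ∨ p = (BM.metastable, BM.one)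
  | RegType.mask1, BM.metastable, p => p = (BM.one, BM.metastable) ∨ p = (BM.metastable, BM.zero)

/-- A circuit with `m` input, `k` local and `n` output registers: a type for each
register, combinational logic with `m + k` input nodes (one per non-output register)
and `k + n` output nodes (one per non-input register), and an initialization of the
non-input registers. -/
structure Circuit (m k n : ℕ) : Type where
  inType : Fin m → RegType
  locType : Fin k → RegType
  outType : Fin n → RegType
  logic : Fin (k + n) → Comb (m + k)
  init : Fin (k + n) → BM

/-- A state of a circuit: values of input, local, and output registers. -/
structure CState (m k n : ℕ) : Type where
  inp : Fin m → BM
  loc : Fin k → BM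
  out : Fin n → BM

/-- A state as a word in `BM^{m+k+n}`. -/
def CState.toVec {m k n : ℕ} (s : CState m k n) : Fin (m + (k + n)) → BM :=
  Fin.append s.inp (Fin.append s.loc s.out)

/-- Read phase: `o ∈ BM^{m+k}` are possible read values of the non-output registers
in state `s`, and `ι'` the corresponding successor states of the input registers. -/
def ReadRel {m k n : ℕ} (C : Circuit m k n) (s : CState m k n)
    (o : Fin (m + k) → BM) (ι' : Fin m → BM) : Prop :=
  (∀ i : Fin m, regRead (C.inType i) (s.inp i) (o (Fin.castAdd k i), ι' i)) ∧
  (∀ j : Fin k, ∃ st', regRead (C.locType j) (s.loc j) (o (Fin.natAdd m j), st'))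

/-- Evaluation phase: `f^G` applied to the read values. -/
noncomputable def evalLogic {m k n : ℕ} (C : Circuit m k n) (o : Fin (m + k) → BM) :
    Fin (k + n) → BM :=
  fun j => (C.logic j).eval o

/-- `Write^C(s)`: possible values written to the non-input registers. -/
def WriteSet {m k n : ℕ} (C : Circuit m k n) (s : CState m k n) :
    Set (Fin (k + n) → BM) :=
  { w | ∃ o ι', ReadRel C s o ι' ∧ inResM (evalLogic C o) w }

/-- Successor-state relation: read all non-output registers, evaluate the logic,
and write an arbitrary partial resolution of the result to the non-input registers. -/
def Succ {m k n : ℕ} (C : Circuit m k n) (s s' : CState m k n) : Prop :=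
  ∃ o ι', ReadRel C s o ι' ∧ s'.inp = ι' ∧
    inResM (evalLogic C o) (Fin.append s'.loc s'.out)

/-- `reach C r s₀ = S^C_r(s₀)`: states reachable in `r` rounds from `s₀`. -/
def reach {m k n : ℕ} (C : Circuit m k n) : ℕ → CState m k n → Set (CState m k n)
  | 0, s => {s}
  | r + 1, s => { t | ∃ u ∈ reach C r s, Succ C u t }

/-- The initial state of `C` with input `ι`. -/
def initState {m k n : ℕ} (C : Circuit m k n) (ι : Fin m → BM) : CState m k n :=
  ⟨ι, fun j => C.init (Fin.castAdd n j), fun j => C.init (Fin.natAdd k j)⟩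

/-- `C_r(ι)`: possible outputs after `r` rounds on input `ι`. -/
def Cout {m k n : ℕ} (C : Circuit m k n) (r : ℕ) (ι : Fin m → BM) :
    Set (Fin n → BM) :=
  { y | ∃ s ∈ reach C r (initState C ι), y = s.out }

/-- `r` rounds of `C` implement `f` iff `C_r(ι) ⊆ f(ι)` for all inputs `ι`. -/
def Implements {m k n : ℕ} (C : Circuit m k n) (r : ℕ)
    (f : (Fin m → BM) → Set (Fin n → BM)) : Prop :=
  ∀ ι, Cout C r ι ⊆ f ι

/-- All registers of the circuit are simple. -/
def OnlySimple {m k n : ℕ} (C : Circuit m k n) : Prop :=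
  (∀ i, C.inType i = RegType.simple) ∧ (∀ j, C.locType j = RegType.simple) ∧
    (∀ j, C.outType j = RegType.simple)

/-- `Fun_S^r`: functions implementable by `r` rounds of circuits with only simple
registers. -/
def FunS (r m n : ℕ) : Set ((Fin m → BM) → Set (Fin n → BM)) :=
  { f | ∃ k, ∃ C : Circuit m k n, OnlySimple C ∧ Implements C r f }

/-- `Fun_M^r`: functions implementable by `r` rounds of circuits with arbitrary
register types. -/
def FunM (r m n : ℕ) : Set ((Fin m → BM) → Set (Fin n → BM)) :=
  { f | ∃ k, ∃ C : Circuit m k n, Implements C r f }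

/-- A pivotal sequence over `BM^N`: consecutive elements differ in exactly one bit,
and that bit is `meta` in one of the two elements. -/
def PivotalSeq {N ℓ : ℕ} (x : Fin (ℓ + 1) → Fin N → BM) : Prop :=
  ∀ i : Fin ℓ,
    ∃ j : Fin N,
      x i.castSucc j ≠ x i.succ j ∧
      (x i.castSucc j = BM.metastable ∨ x i.succ j = BM.metastable) ∧
      ∀ j' : Fin N, x i.castSucc j' ≠ x i.succ j' → j' = j

/-- A function `f : BM^m → Pow(BM^n)` is natural iff it is bit-wise and closed
(a product of component functions each taking values in `{{0}, {1}, BM}`)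
and specific (stabilizing the input restricts the output). -/
def IsNatural {m n : ℕ} (f : (Fin m → BM) → Set (Fin n → BM)) : Prop :=
  (∃ g : Fin n → (Fin m → BM) → Set BM,
      (∀ i x, g i x = {BM.zero} ∨ g i x = {BM.one} ∨ g i x = (Set.univ : Set BM)) ∧
      (∀ x, f x = { y | ∀ i, y i ∈ g i x })) ∧
  (∀ x y, inRes x y → f y ⊆ f x)

/-- The `i`-th component of the metastable closure of `f : B^m → B^n`. -/
noncomputable def mclosureC {m n : ℕ} (f : (Fin m → Bool) → Fin n → Bool)
    (x : Fin m → BM) (i : Fin n) : Set BM :=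
  if ∀ z ∈ boolRes x, f z i = false then {BM.zero}
  else if ∀ z ∈ boolRes x, f z i = true then {BM.one}
  else Set.univ

/-- The metastable closure `[f]_M : BM^m → Pow(BM^n)` of `f : B^m → B^n`. -/
noncomputable def mclosure {m n : ℕ} (f : (Fin m → Bool) → Fin n → Bool)
    (x : Fin m → BM) : Set (Fin n → BM) :=
  { y | ∀ i, y i ∈ mclosureC f x i }

/-!
Order `BM` by information, with `metastable` below `0` and `1`. Kleene extensions are monotone,
and a register in a more metastable state can always be read with a more metastable result, so any
round from `s'` is matched from below by a round from any `s ≤ s'`; two rounds from the same state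
are joined through the read that merges their two reads. By induction on rounds, states reachable
from `ι ∘ x₀` and `ι' ∘ x₀` are thus joined by a zigzag of resolutions among reachable states,
starting from `(ι ⊓ ι') ∘ x₀`. Along such a zigzag the outputs can only change through a metastable
output register; if there were none, `C_r(ι)` and `C_r(ι')` would share an output.
-/

namespace BM

/-- The information order: `a ≤ b` iff `b` resolves `a`, so `metastable` is the least element
and `inResM x y` is `x ≤ y`. -/
instance : SemilatticeInf BM where
  le a b := a = b ∨ a = metastable
  le_refl _ := Or.inl rfl
  le_trans a b c := by rintro (rfl | rfl) (rfl | rfl) <;> simp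
  le_antisymm a b := by rintro (rfl | rfl) (h | rfl) <;> simp_all
  inf a b := if a = b then a else metastable
  inf_le_left a b := by by_cases h : a = b <;> simp [h]
  inf_le_right a b := by by_cases h : a = b <;> simp [h]
  le_inf a b c := by
    rintro (rfl | rfl) hc
    · rcases hc with rfl | rfl <;> simp
    · exact Or.inr rfl

theorem le_iff {a b : BM} : a ≤ b ↔ a = b ∨ a = metastable := Iff.rfl

theorem metastable_le (a : BM) : metastable ≤ a := Or.inr rfl

theorem eq_of_le_of_ne_metastable {a b : BM} (h : a ≤ b) (ha : a ≠ metastable) : a = b :=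
  h.resolve_right ha

end BM

theorem Fin.append_le_append_iff {α : Type*} [Preorder α] {p q : ℕ} {a a' : Fin p → α}
    {b b' : Fin q → α} : Fin.append a b ≤ Fin.append a' b' ↔ a ≤ a' ∧ b ≤ b' := by
  simp only [Pi.le_def, Fin.forall_fin_add, Fin.append_left, Fin.append_right]

theorem boolRes_antitone {N : ℕ} : Antitone (boolRes (k := N)) := by
  intro x y hxy z hz i
  rcases hxy i with h | h
  · rw [h]; exact hz i
  · exact Or.inr h

theorem boolRes_nonempty {N : ℕ} (x : Fin N → BM) : (boolRes x).Nonempty :=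
  ⟨fun i => x i = BM.one, fun i => by cases h : x i <;> simp [h, BM.ofBool]⟩

theorem kleene_mono {N : ℕ} (f : (Fin N → Bool) → Bool) : Monotone (kleene f) := by
  intro x y hxy
  have hsub := boolRes_antitone hxy
  obtain ⟨z, hz⟩ := boolRes_nonempty y
  unfold kleene
  by_cases h0 : ∀ z ∈ boolRes x, f z = false
  · rw [if_pos h0, if_pos fun z hz => h0 z (hsub hz)]
  by_cases h1 : ∀ z ∈ boolRes x, f z = true
  · have h0' : ¬ ∀ z ∈ boolRes y, f z = false := fun h => by simpa [h z hz] using h1 z (hsub hz)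
    rw [if_neg h0, if_pos h1, if_neg h0', if_pos fun z hz => h1 z (hsub hz)]
  · rw [if_neg h0, if_neg h1]
    exact BM.metastable_le _

theorem Comb.eval_mono {N : ℕ} (c : Comb N) : Monotone fun x => c.eval x := by
  induction c with
  | input i => exact fun x y h => h i
  | const b => exact fun _ _ _ => le_rfl
  | gate j f cs ih => exact fun x y h => kleene_mono f fun t => ih t h

theorem evalLogic_mono {m k n : ℕ} (C : Circuit m k n) : Monotone (evalLogic C) :=
  fun _ _ h j => (C.logic j).eval_mono h

theorem exists_regRead (t : RegType) (b : BM) : ∃ p, regRead t b p := by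
  cases t <;> cases b <;> simp [regRead]

theorem exists_regRead_le_of_le {t : RegType} {b b' : BM} {p' : BM × BM} (hb : b ≤ b')
    (h : regRead t b' p') : ∃ p, regRead t b p ∧ p ≤ p' := by
  rcases hb with rfl | rfl
  · exact ⟨p', h, le_rfl⟩
  cases t <;> cases b' <;> simp only [regRead] at h <;> rcases h with rfl | rfl <;>
    simp [regRead, or_and_right, exists_or, Prod.le_def, BM.le_iff]

theorem exists_regRead_merge {t : RegType} {b : BM} {p₁ p₂ : BM × BM} (h₁ : regRead t b p₁)
    (h₂ : regRead t b p₂) :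
    ∃ p, regRead t b p ∧ p.1 ≤ p₁.1 ⊓ p₂.1 ∧ p₁.2 ≤ p.2 ∧ p₂.2 ≤ p.2 := by
  cases t <;> cases b <;> simp only [regRead] at h₁ h₂ <;> rcases h₁ with rfl | rfl <;>
    rcases h₂ with rfl | rfl <;>
    simp [regRead, or_and_right, exists_or, BM.le_iff]

section Circuit

variable {m k n : ℕ} {C : Circuit m k n}

theorem exists_readRel {s : CState m k n} {P : Fin m → BM × BM → Prop} {Q : Fin k → BM → Prop}
    (hinp : ∀ i, ∃ p, regRead (C.inType i) (s.inp i) p ∧ P i p)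
    (hloc : ∀ j, ∃ p, regRead (C.locType j) (s.loc j) p ∧ Q j p.1) :
    ∃ o ι, ReadRel C s o ι ∧ (∀ i, P i (o (Fin.castAdd k i), ι i)) ∧
      ∀ j, Q j (o (Fin.natAdd m j)) := by
  choose p hp hP using hinp
  choose q hq hQ using hloc
  refine ⟨Fin.append (fun i => (p i).1) (fun j => (q j).1), fun i => (p i).2,
    ⟨fun i => ?_, fun j => ⟨(q j).2, ?_⟩⟩, fun i => ?_, fun j => ?_⟩ <;>
    simp only [Fin.append_left, Fin.append_right, Prod.mk.eta, *]

theorem ReadRel.exists_le_of_le {s s' : CState m k n} {o' : Fin (m + k) → BM} {ι' : Fin m → BM}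
    (hinp : s.inp ≤ s'.inp) (hloc : s.loc ≤ s'.loc) (h : ReadRel C s' o' ι') :
    ∃ o ι, ReadRel C s o ι ∧ o ≤ o' ∧ ι ≤ ι' := by
  obtain ⟨o, ι, hread, hι, ho⟩ := exists_readRel
    (P := fun i p => p ≤ (o' (Fin.castAdd k i), ι' i)) (Q := fun j v => v ≤ o' (Fin.natAdd m j))
    (fun i => exists_regRead_le_of_le (hinp i) (h.1 i))
    (fun j => (h.2 j).elim fun _ hj =>
      (exists_regRead_le_of_le (hloc j) hj).imp fun _ hp => ⟨hp.1, hp.2.1⟩)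
  exact ⟨o, ι, hread, (Fin.forall_fin_add _).2 ⟨fun i => (hι i).1, ho⟩, fun i => (hι i).2⟩

theorem ReadRel.exists_merge {s : CState m k n} {o₁ o₂ : Fin (m + k) → BM} {ι₁ ι₂ : Fin m → BM}
    (h₁ : ReadRel C s o₁ ι₁) (h₂ : ReadRel C s o₂ ι₂) :
    ∃ o ι, ReadRel C s o ι ∧ o ≤ o₁ ⊓ o₂ ∧ ι₁ ≤ ι ∧ ι₂ ≤ ι := by
  obtain ⟨o, ι, hread, hι, ho⟩ := exists_readRel
    (P := fun i p => p.1 ≤ o₁ (Fin.castAdd k i) ⊓ o₂ (Fin.castAdd k i) ∧ ι₁ i ≤ p.2 ∧ ι₂ i ≤ p.2)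
    (Q := fun j v => v ≤ o₁ (Fin.natAdd m j) ⊓ o₂ (Fin.natAdd m j))
    (fun i => exists_regRead_merge (h₁.1 i) (h₂.1 i))
    (fun j => (h₁.2 j).elim fun _ hj₁ => (h₂.2 j).elim fun _ hj₂ =>
      (exists_regRead_merge hj₁ hj₂).imp fun _ hp => ⟨hp.1, hp.2.1⟩)
  exact ⟨o, ι, hread, (Fin.forall_fin_add _).2 ⟨fun i => (hι i).1, ho⟩,
    fun i => (hι i).2.1, fun i => (hι i).2.2⟩

def CState.ofWrite (ι : Fin m → BM) (w : Fin (k + n) → BM) : CState m k n :=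
  ⟨ι, fun j => w (Fin.castAdd n j), fun j => w (Fin.natAdd k j)⟩

theorem CState.append_loc_out_ofWrite (ι : Fin m → BM) (w : Fin (k + n) → BM) :
    Fin.append (ofWrite ι w : CState m k n).loc (ofWrite ι w).out = w :=
  Fin.append_castAdd_natAdd

theorem CState.toVec_le_toVec_iff {s t : CState m k n} :
    s.toVec ≤ t.toVec ↔ s.inp ≤ t.inp ∧ Fin.append s.loc s.out ≤ Fin.append t.loc t.out :=
  Fin.append_le_append_iff

theorem CState.toVec_le_toVec_ofWrite_iff {s : CState m k n} {ι : Fin m → BM}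
    {w : Fin (k + n) → BM} :
    s.toVec ≤ (ofWrite ι w).toVec ↔ s.inp ≤ ι ∧ Fin.append s.loc s.out ≤ w := by
  rw [toVec_le_toVec_iff, append_loc_out_ofWrite]
  rfl

theorem succ_ofWrite {s : CState m k n} {o : Fin (m + k) → BM} {ι : Fin m → BM}
    {w : Fin (k + n) → BM} (h : ReadRel C s o ι) (hw : evalLogic C o ≤ w) :
    Succ C s (.ofWrite ι w) :=
  ⟨o, ι, h, rfl, by rwa [CState.append_loc_out_ofWrite]⟩

theorem exists_succ (s : CState m k n) : ∃ t, Succ C s t := by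
  obtain ⟨o, ι, hread, -⟩ := exists_readRel (C := C) (s := s) (P := fun _ _ => True)
    (Q := fun _ _ => True) (fun i => (exists_regRead _ _).imp fun _ hp => ⟨hp, trivial⟩)
    (fun j => (exists_regRead _ _).imp fun _ hp => ⟨hp, trivial⟩)
  exact ⟨_, succ_ofWrite hread le_rfl⟩

theorem Succ.exists_le_of_le {s s' t' : CState m k n} (hs : s.toVec ≤ s'.toVec)
    (h : Succ C s' t') : ∃ t, Succ C s t ∧ t.toVec ≤ t'.toVec := by
  obtain ⟨o', _, hread', rfl, hw'⟩ := h
  obtain ⟨hinp, hrest⟩ := CState.toVec_le_toVec_iff.1 hs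
  obtain ⟨o, ι, hread, ho, hι⟩ :=
    hread'.exists_le_of_le hinp (Fin.append_le_append_iff.1 hrest).1
  refine ⟨_, succ_ofWrite hread ((evalLogic_mono C ho).trans hw'), ?_⟩
  rw [CState.toVec_le_toVec_iff, CState.append_loc_out_ofWrite]
  exact ⟨hι, le_rfl⟩

end Circuit

section Linked

variable {m k n : ℕ} {C : Circuit m k n} {q : ℕ}

def ReachableIn (C : Circuit m k n) (q : ℕ) (s : CState m k n) : Prop :=
  ∃ ι, s ∈ reach C q (initState C ι)

theorem ReachableIn.of_succ {s t : CState m k n} (hs : ReachableIn C q s) (h : Succ C s t) :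
    ReachableIn C (q + 1) t :=
  hs.imp fun _ hι => ⟨s, hι, h⟩

/-- Zigzags of resolutions through states reachable in `q` rounds: along one, an output register
can change its value only by being metastable at one end of a step. -/
def Linked (C : Circuit m k n) (q : ℕ) : CState m k n → CState m k n → Prop :=
  Relation.ReflTransGen <| Relation.SymmGen fun s t =>
    ReachableIn C q s ∧ ReachableIn C q t ∧ s.toVec ≤ t.toVec

theorem Linked.of_le {s t : CState m k n} (hs : ReachableIn C q s) (ht : ReachableIn C q t)
    (h : s.toVec ≤ t.toVec) : Linked C q s t :=
  .single (.inl ⟨hs, ht, h⟩)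

theorem Linked.symm {s t : CState m k n} (h : Linked C q s t) : Linked C q t s := by
  unfold Linked at *
  exact Std.Symm.symm _ _ h

theorem Linked.trans {s t u : CState m k n} (h₁ : Linked C q s t) (h₂ : Linked C q t u) :
    Linked C q s u :=
  Relation.ReflTransGen.trans h₁ h₂

theorem linked_of_succ_of_succ {s t₁ t₂ : CState m k n} (hs : ReachableIn C q s)
    (h₁ : Succ C s t₁) (h₂ : Succ C s t₂) : Linked C (q + 1) t₁ t₂ := by
  have ht₁ := hs.of_succ h₁
  have ht₂ := hs.of_succ h₂
  obtain ⟨o₁, _, hread₁, rfl, hw₁⟩ := h₁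
  obtain ⟨o₂, _, hread₂, rfl, hw₂⟩ := h₂
  obtain ⟨o, ι, hread, ho, hι₁, hι₂⟩ := hread₁.exists_merge hread₂
  -- The zigzag `t₁ ≤ X₁ ≥ X ≤ X₂ ≥ t₂` runs through the successors `X₁, X, X₂` that follow the
  -- merged read and write `t₁`'s value, the evaluated value and `t₂`'s value.
  set w₁ := Fin.append t₁.loc t₁.out
  set w₂ := Fin.append t₂.loc t₂.out
  have hw₁' : evalLogic C o ≤ w₁ := (evalLogic_mono C (ho.trans inf_le_left)).trans hw₁
  have hw₂' : evalLogic C o ≤ w₂ := (evalLogic_mono C (ho.trans inf_le_right)).trans hw₂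
  have hX := hs.of_succ (succ_ofWrite (w := evalLogic C o) hread le_rfl)
  have hX₁ := hs.of_succ (succ_ofWrite hread hw₁')
  have hX₂ := hs.of_succ (succ_ofWrite hread hw₂')
  have hXX : ∀ {w}, evalLogic C o ≤ w →
      (CState.ofWrite ι (evalLogic C o) : CState m k n).toVec ≤ (CState.ofWrite ι w).toVec :=
    fun hw => CState.toVec_le_toVec_ofWrite_iff.2 ⟨le_rfl, by
      rwa [CState.append_loc_out_ofWrite]⟩
  exact (Linked.of_le ht₁ hX₁ (CState.toVec_le_toVec_ofWrite_iff.2 ⟨hι₁, le_rfl⟩)).trans <|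
    (Linked.of_le hX hX₁ (hXX hw₁')).symm.trans <| (Linked.of_le hX hX₂ (hXX hw₂')).trans
    (Linked.of_le ht₂ hX₂ (CState.toVec_le_toVec_ofWrite_iff.2 ⟨hι₂, le_rfl⟩)).symm

theorem linked_succ_of_le {s s' t t' : CState m k n} (hs : ReachableIn C q s)
    (hs' : ReachableIn C q s') (h : s.toVec ≤ s'.toVec) (ht : Succ C s t) (ht' : Succ C s' t') :
    Linked C (q + 1) t t' := by
  obtain ⟨u, hu, hut'⟩ := ht'.exists_le_of_le h
  exact (linked_of_succ_of_succ hs ht hu).trans (.of_le (hs.of_succ hu) (hs'.of_succ ht') hut')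

theorem Linked.succ {s s' t t' : CState m k n} (h : Linked C q s s') (hs : ReachableIn C q s)
    (ht : Succ C s t) (ht' : Succ C s' t') : Linked C (q + 1) t t' := by
  induction h using Relation.ReflTransGen.head_induction_on generalizing t with
  | refl => exact linked_of_succ_of_succ hs ht ht'
  | @head s s₁ hstep _ ih =>
    obtain ⟨u, hu⟩ := exists_succ (C := C) s₁
    rcases hstep with ⟨-, hu', hle⟩ | ⟨hu', -, hle⟩
    · exact (linked_succ_of_le hs hu' hle ht hu).trans (ih hu' hu)
    · exact (linked_succ_of_le hu' hs hle hu ht).symm.trans (ih hu' hu)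

theorem linked_initState (ι ι' : Fin m → BM) :
    Linked C 0 (initState C ι) (initState C ι') := by
  have hle : ∀ {x y}, x ≤ y → (initState C x).toVec ≤ (initState C y).toVec :=
    fun hxy => Fin.append_le_append_iff.2 ⟨hxy, le_rfl⟩
  have hreach : ∀ x, ReachableIn C 0 (initState C x) := fun x => ⟨x, rfl⟩
  exact (Linked.of_le (hreach _) (hreach _) (hle inf_le_left)).symm.trans
    (.of_le (hreach (ι ⊓ ι')) (hreach _) (hle inf_le_right))

theorem exists_linked_reach (C : Circuit m k n) (ι ι' : Fin m → BM) (r : ℕ) :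
    ∃ s ∈ reach C r (initState C ι), ∃ s' ∈ reach C r (initState C ι'), Linked C r s s' := by
  induction r with
  | zero => exact ⟨_, rfl, _, rfl, linked_initState ι ι'⟩
  | succ q ih =>
    obtain ⟨s, hs, s', hs', hlinked⟩ := ih
    obtain ⟨t, ht⟩ := exists_succ (C := C) s
    obtain ⟨t', ht'⟩ := exists_succ (C := C) s'
    exact ⟨t, ⟨s, hs, ht⟩, t', ⟨s', hs', ht'⟩, hlinked.succ ⟨ι, hs⟩ ht ht'⟩

theorem Linked.out_eq {s t : CState m k n}
    (hstable : ∀ u, ReachableIn C q u → ∀ j, u.out j ≠ BM.metastable) (h : Linked C q s t) :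
    s.out = t.out := by
  have hstep : ∀ {u v : CState m k n}, ReachableIn C q u → u.toVec ≤ v.toVec → u.out = v.out :=
    fun hu huv => funext fun j => BM.eq_of_le_of_ne_metastable
      ((Fin.append_le_append_iff.1 (CState.toVec_le_toVec_iff.1 huv).2).2 j) (hstable _ hu j)
  induction h with
  | refl => rfl
  | tail _ huv ih =>
    rcases huv with ⟨hu, -, hle⟩ | ⟨hv, -, hle⟩
    · exact ih.trans (hstep hu hle)
    · exact ih.trans (hstep hv hle).symm

end Linked

theorem disjoint_outputs_force_metastability_general {m k n : ℕ} (C : Circuit m k n)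
    (r : ℕ) (ι ι' : Fin m → BM)
    (h : Cout C r ι ∩ Cout C r ι' = ∅) :
    ∃ ι'' : Fin m → BM, ∃ s ∈ reach C r (initState C ι''), ∃ j : Fin n,
      s.out j = BM.metastable := by
  by_contra! hstable
  obtain ⟨s, hs, s', hs', hlinked⟩ := exists_linked_reach C ι ι' r
  have hout : s.out = s'.out := hlinked.out_eq fun u ⟨ι'', hu⟩ => hstable ι'' u hu
  exact (Set.eq_empty_iff_forall_notMem.1 h) s.out ⟨⟨s, hs, rfl⟩, s', hs', hout⟩

/-- if `C_r(ι) ∩ C_r(ι') = ∅` for some inputs `ι, ι'`, then `C` has an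
`r`-round execution in which an output register becomes metastable. -/
theorem disjoint_outputs_force_metastability {m k n : ℕ} (C : Circuit m k n)
    (r : ℕ) (hr : 0 < r) (ι ι' : Fin m → BM)
    (h : Cout C r ι ∩ Cout C r ι' = ∅) :
    ∃ ι'' : Fin m → BM, ∃ s ∈ reach C r (initState C ι''), ∃ j : Fin n,
      s.out j = BM.metastable :=
  disjoint_outputs_force_metastability_general C r ι ι' h
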